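/- Let m ≥ 1, let p and q be complex polynomials of degree at most m−1 having no common complex root, and let θ_1, …, θ_{2m−1} be distinct real numbers such that q(θ_j) ≠ 0 and p(θ_j)/q(θ_j) = e^{iθ_j} for j = 1, …, 2m−1. Then q(x) ≠ 0 for every real x, and |p(x)/q(x)| = 1 for every real x. -/

import Mathlib

/-! On the real axis `|p|² - |q|²` is the restriction of the polynomial `p p̄ - q q̄`, where `p̄`
conjugates the coefficients, and this polynomial has degree at most `2m - 2`. Since `|e^{iθ}| = 1`,
the interpolation conditions make it vanish at the `2m - 1` nodes, so it is identically zero.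
Hence `|p| = |q|` on ℝ, and a real zero of `q` would be a common zero of `p` and `q`. -/

open Polynomial ComplexConjugate

namespace Polynomial

lemma eval_map_conj_ofReal (p : ℂ[X]) (x : ℝ) :
    (p.map (starRingEnd ℂ)).eval (x : ℂ) = conj (p.eval (x : ℂ)) := by
  simpa only [Complex.conj_ofReal] using eval_map_apply (p := p) (f := starRingEnd ℂ) (x : ℂ)

lemma eval_mul_map_conj_ofReal (p : ℂ[X]) (x : ℝ) :
    (p * p.map (starRingEnd ℂ)).eval (x : ℂ) = ((‖p.eval (x : ℂ)‖ ^ 2 : ℝ) : ℂ) := by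
  rw [eval_mul, eval_map_conj_ofReal, Complex.mul_conj', Complex.ofReal_pow]

lemma natDegree_mul_map_conj_le {p : ℂ[X]} {n : ℕ} (hp : p.natDegree ≤ n) :
    (p * p.map (starRingEnd ℂ)).natDegree ≤ 2 * n :=
  calc _ ≤ p.natDegree + (p.map (starRingEnd ℂ)).natDegree := natDegree_mul_le
    _ ≤ 2 * n := by rw [natDegree_map]; omega

theorem norm_eval_ofReal_eq_of_card_lt {p q : ℂ[X]} {n : ℕ} (hp : p.natDegree ≤ n)
    (hq : q.natDegree ≤ n) {ι : Type*} [Fintype ι] {t : ι → ℝ} (ht : Function.Injective t)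
    (hcard : 2 * n < Fintype.card ι) (hpq : ∀ i, ‖p.eval (t i : ℂ)‖ = ‖q.eval (t i : ℂ)‖)
    (x : ℝ) : ‖p.eval (x : ℂ)‖ = ‖q.eval (x : ℂ)‖ := by
  set D := p * p.map (starRingEnd ℂ) - q * q.map (starRingEnd ℂ)
  have hD : ∀ y : ℝ,
      D.eval (y : ℂ) = ((‖p.eval (y : ℂ)‖ ^ 2 - ‖q.eval (y : ℂ)‖ ^ 2 : ℝ) : ℂ) := fun y => by
    rw [eval_sub, eval_mul_map_conj_ofReal, eval_mul_map_conj_ofReal, Complex.ofReal_sub]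
  have hD_zero : D = 0 := by
    refine eq_zero_of_natDegree_lt_card_of_eval_eq_zero D (Complex.ofReal_injective.comp ht)
      (fun i => by simp only [Function.comp_apply, hD, hpq, sub_self, Complex.ofReal_zero]) ?_
    exact (natDegree_sub_le _ _).trans_lt <|
      (max_le (natDegree_mul_map_conj_le hp) (natDegree_mul_map_conj_le hq)).trans_lt hcard
  have hx := hD x
  rw [hD_zero, eval_zero, eq_comm, Complex.ofReal_eq_zero, sub_eq_zero] at hx
  exact (pow_left_inj₀ (norm_nonneg _) (norm_nonneg _) two_ne_zero).mp hx

end Polynomial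

theorem stmt_0 (m : ℕ) (hm : 1 ≤ m) (p q : Polynomial ℂ)
    (hp : p.degree ≤ (m - 1 : ℕ)) (hq : q.degree ≤ (m - 1 : ℕ))
    (hirr : ∀ z : ℂ, ¬(p.eval z = 0 ∧ q.eval z = 0))
    (θ : Fin (2 * m - 1) → ℝ) (hθ : Function.Injective θ)
    (hqθ : ∀ j, q.eval ((θ j : ℝ) : ℂ) ≠ 0)
    (hint : ∀ j, p.eval ((θ j : ℝ) : ℂ) / q.eval ((θ j : ℝ) : ℂ)
      = Complex.exp (Complex.I * (θ j : ℝ))) :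
    (∀ x : ℝ, q.eval (x : ℂ) ≠ 0) ∧
    (∀ x : ℝ, ‖p.eval (x : ℂ) / q.eval (x : ℂ)‖ = 1) := by
  have h_nodes : ∀ j, ‖p.eval (θ j : ℂ)‖ = ‖q.eval (θ j : ℂ)‖ := fun j => by
    have h := congrArg norm (hint j)
    rwa [norm_div, mul_comm, Complex.norm_exp_ofReal_mul_I,
      div_eq_one_iff_eq (norm_ne_zero_iff.mpr (hqθ j))] at h
  have h_real (x : ℝ) : ‖p.eval (x : ℂ)‖ = ‖q.eval (x : ℂ)‖ :=
    norm_eval_ofReal_eq_of_card_lt (natDegree_le_iff_degree_le.mpr hp)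
      (natDegree_le_iff_degree_le.mpr hq) hθ (by rw [Fintype.card_fin]; omega) h_nodes x
  have hq_ne (x : ℝ) : q.eval (x : ℂ) ≠ 0 := fun hx =>
    hirr x ⟨norm_eq_zero.mp ((h_real x).trans (by rw [hx, norm_zero])), hx⟩
  exact ⟨hq_ne, fun x => by rw [norm_div, h_real x, div_self (norm_ne_zero_iff.mpr (hq_ne x))]⟩
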